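/- Let N ≥ 2 and let Γ : ℝ → ℝ be 2π-periodic, twice continuously differentiable on ℝ ∖ 2πℤ, with Γ'(θ) > 0 for all θ ∈ (0,2π) and either Γ''(θ) > 0 for all θ ∈ (0,2π) or Γ''(θ) < 0 for all θ ∈ (0,2π). Consider the relative phase dynamics φ̇ᵢ = Γ(φᵢ) + Σ_{j=1, j≠i}^{N−1} Γ(φᵢ − φ_j) − Σ_{j=1}^{N−1} Γ(−φ_j), i = 1,…,N−1, on the open cone C = {φ ∈ ℝ^{N−1} : 0 < φ₁ < φ₂ < ⋯ < φ_{N−1} < 2π}. Then the dynamics are expanding in C with respect to the 1-norm: for any two continuously differentiable solutions φ, ψ : [0,T] → C of these dynamics with φ(t) ≠ ψ(t) for all t ∈ [0,T], the function t ↦ ‖φ(t) − ψ(t)‖ is strictly increasing on [0,T]. -/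

import Mathlib

open Real Set

/-- The open cone `C = {φ ∈ ℝ^{N−1} : 0 < φ₁ < φ₂ < ⋯ < φ_{N−1} < 2π}`. -/
def phaseCone {m : ℕ} : Set (Fin m → ℝ) :=
  {x | (∀ i, 0 < x i) ∧ StrictMono x ∧ ∀ i, x i < 2 * π}

/-- The 1-norm `‖φ‖ = |φ₁| + Σ_{k=1}^{N−2} |φ_k − φ_{k+1}| + |φ_{N−1}|`. -/
noncomputable def norm1 {m : ℕ} (x : Fin m → ℝ) : ℝ :=
  (if h : 0 < m then
      |x ⟨0, h⟩| + |x ⟨m - 1, Nat.sub_lt h Nat.one_pos⟩|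
    else 0) +
  ∑ k : Fin (m - 1),
    |x ⟨(k : ℕ), Nat.lt_of_lt_of_le k.isLt (Nat.sub_le m 1)⟩ -
      x ⟨(k : ℕ) + 1, Nat.add_lt_of_lt_sub k.isLt⟩|

/-- The vector field of the relative phase dynamics
`φ̇ᵢ = Γ(φᵢ) + Σ_{j≠i} Γ(φᵢ − φ_j) − Σ_j Γ(−φ_j)`. -/
noncomputable def relVF (Γ : ℝ → ℝ) {m : ℕ} (v : Fin m → ℝ) : Fin m → ℝ :=
  fun i => Γ (v i) + ∑ j ∈ Finset.univ.erase i, Γ (v i - v j) - ∑ j, Γ (-v j)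

/-!
Put the reference oscillator back at relative phase `0`: a point of the cone becomes a cyclically
ordered configuration `x` of `N` points on the circle, and `‖φ - ψ‖` becomes the cyclic total
variation `∑ₐ |eₐ - eₐ₊₁|` of `e = x - y`. At a time `t`, the signs `σₐ` of the differences
`eₐ - eₐ₊₁` define a differentiable lower support `∑ₐ σₐ (eₐ - eₐ₊₁)` of the norm that touches it at
`t`, so it suffices that its derivative `D` is positive. Summing by parts around the circle cancels
the velocity of the reference oscillator and gives
`D = ∑_b ∑ₐ (σₐ - σₐ₋₁) (Γ(xₐ - x_b) - Γ(yₐ - y_b))`.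

For a fixed base point `b`, move `y` linearly to `x`; all arcs `x_{b+r} - x_b` (`r = 1, …, N - 1`)
stay in `(0, 2π)`. Along the way the derivative of the inner sum is `∑ᵣ Wᵣ βᵣ` with weights
`Wᵣ = Γ'(arcᵣ) > 0`, monotone in `r` because `Γ` is convex or concave, and coefficients
`βᵣ = (σ_{b+r} - σ_{b+r-1}) (e_{b+r} - e_b)` whose partial sums lie in `[0, ‖e‖]` and add up to
`‖e‖ > 0`. Abel summation makes `∑ᵣ Wᵣ βᵣ` positive.
-/

open Filter Topology

theorem sum_range_mul_pos_of_partialSums {n : ℕ} {W b : ℕ → ℝ}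
    (hW : ∀ i < n, 0 < W i) (hWmono : MonotoneOn W (Iio n) ∨ AntitoneOn W (Iio n))
    (hS : ∀ k ≤ n, ∑ i ∈ Finset.range k, b i ∈ Icc 0 (∑ i ∈ Finset.range n, b i))
    (hpos : 0 < ∑ i ∈ Finset.range n, b i) :
    0 < ∑ i ∈ Finset.range n, W i * b i := by
  have hn : 0 < n := Nat.pos_of_ne_zero fun h => by simp [h] at hpos
  have hparts := Finset.sum_range_by_parts W b n
  simp only [smul_eq_mul] at hparts
  rw [hparts]
  set S := ∑ i ∈ Finset.range n, b i
  rcases hWmono with hmono | hanti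
  · have hterm : ∀ i ∈ Finset.range (n - 1),
        (W (i + 1) - W i) * ∑ j ∈ Finset.range (i + 1), b j ≤ (W (i + 1) - W i) * S := by
      intro i hi
      have hi : i + 1 < n := by rw [Finset.mem_range] at hi; omega
      exact mul_le_mul_of_nonneg_left (hS (i + 1) hi.le).2
        (sub_nonneg.2 (hmono (mem_Iio.2 (by omega)) (mem_Iio.2 hi) (by omega)))
    have htel : ∑ i ∈ Finset.range (n - 1), (W (i + 1) - W i) * S = (W (n - 1) - W 0) * S := by
      rw [← Finset.sum_mul, Finset.sum_range_sub]
    have := Finset.sum_le_sum hterm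
    nlinarith [hW 0 hn]
  · have hterm : ∀ i ∈ Finset.range (n - 1),
        (W (i + 1) - W i) * ∑ j ∈ Finset.range (i + 1), b j ≤ 0 := by
      intro i hi
      have hi : i + 1 < n := by rw [Finset.mem_range] at hi; omega
      exact mul_nonpos_of_nonpos_of_nonneg
        (sub_nonpos.2 (hanti (mem_Iio.2 (by omega)) (mem_Iio.2 hi) (by omega)))
        (hS (i + 1) hi.le).1
    have := Finset.sum_nonpos hterm
    nlinarith [hW (n - 1) (by omega)]

theorem sum_range_sub_mul_succ_eq (σ E : ℕ → ℝ) (k : ℕ) :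
    ∑ i ∈ Finset.range k, (σ (i + 1) - σ i) * E (i + 1)
      = σ k * E k - σ 0 * E 0 + ∑ i ∈ Finset.range k, σ i * (E i - E (i + 1)) := by
  induction k with
  | zero => simp
  | succ k ih => rw [Finset.sum_range_succ, Finset.sum_range_succ, ih]; ring

section SignedSums

variable {m : ℕ} {σ E : ℕ → ℝ}

theorem signed_sum_eq_sum_abs (hE0 : E 0 = 0) (hEm : E (m + 1) = 0)
    (hσ : ∀ r, σ r * (E r - E (r + 1)) = |E r - E (r + 1)|) :
    ∑ i ∈ Finset.range m, (σ (i + 1) - σ i) * E (i + 1)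
      = ∑ r ∈ Finset.range (m + 1), |E r - E (r + 1)| := by
  rw [sum_range_sub_mul_succ_eq, Finset.sum_range_succ, ← hσ m, hEm, hE0]
  simp only [hσ]
  ring

theorem signed_partialSum_mem_Icc (hE0 : E 0 = 0) (hEm : E (m + 1) = 0)
    (hσ1 : ∀ r, |σ r| ≤ 1) (hσ : ∀ r, σ r * (E r - E (r + 1)) = |E r - E (r + 1)|)
    {k : ℕ} (hk : k ≤ m) :
    ∑ i ∈ Finset.range k, (σ (i + 1) - σ i) * E (i + 1)
      ∈ Icc 0 (∑ i ∈ Finset.range m, (σ (i + 1) - σ i) * E (i + 1)) := by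
  rw [signed_sum_eq_sum_abs hE0 hEm hσ]
  simp only [sum_range_sub_mul_succ_eq, hE0, mul_zero, sub_zero, hσ]
  have hσE : |σ k * E k| ≤ |E k| := by
    rw [abs_mul]; exact mul_le_of_le_one_left (abs_nonneg _) (hσ1 k)
  have hleft : |E k| ≤ ∑ r ∈ Finset.range k, |E r - E (r + 1)| := by
    simpa [Real.dist_eq, hE0, ← Finset.range_eq_Ico] using dist_le_Ico_sum_dist E (Nat.zero_le k)
  have hright : |E k| ≤ ∑ r ∈ Finset.Ico k (m + 1), |E r - E (r + 1)| := by
    simpa [Real.dist_eq, hEm] using dist_le_Ico_sum_dist E (show k ≤ m + 1 by omega)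
  rw [← Finset.sum_range_add_sum_Ico _ (show k ≤ m + 1 by omega)]
  constructor <;> linarith [neg_abs_le (σ k * E k), le_abs_self (σ k * E k)]

end SignedSums

structure IsMonotoneCoupling (Γ : ℝ → ℝ) : Prop where
  differentiableOn : DifferentiableOn ℝ Γ (Ioo 0 (2 * π))
  deriv_pos : ∀ θ ∈ Ioo 0 (2 * π), 0 < deriv Γ θ
  monotoneOn_deriv_or_antitoneOn_deriv :
    MonotoneOn (deriv Γ) (Ioo 0 (2 * π)) ∨ AntitoneOn (deriv Γ) (Ioo 0 (2 * π))

theorem IsMonotoneCoupling.sum_range_sign_diff_mul_sub_pos {Γ : ℝ → ℝ} (hΓ : IsMonotoneCoupling Γ)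
    {m : ℕ} {P Q σ : ℕ → ℝ} (hP : StrictMono P) (hQ : StrictMono Q)
    (hPm : P (m + 1) = P 0 + 2 * π) (hQm : Q (m + 1) = Q 0 + 2 * π) (hσ1 : ∀ r, |σ r| ≤ 1)
    (hσ : ∀ r, σ r * ((P - Q) r - (P - Q) (r + 1)) = |(P - Q) r - (P - Q) (r + 1)|)
    (hν : 0 < ∑ r ∈ Finset.range (m + 1), |(P - Q) r - (P - Q) (r + 1)|) :
    0 < ∑ i ∈ Finset.range m,
      (σ (i + 1) - σ i) * (Γ (P (i + 1) - P 0) - Γ (Q (i + 1) - Q 0)) := by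
  set E : ℕ → ℝ := fun r => (P - Q) r - (P - Q) 0 with hE
  have hdE : ∀ r, E r - E (r + 1) = (P - Q) r - (P - Q) (r + 1) := fun r => by
    simp only [hE]; ring
  have hE0 : E 0 = 0 := sub_self _
  have hEm : E (m + 1) = 0 := by simp only [hE, Pi.sub_apply, hPm, hQm]; ring
  simp only [← hdE] at hσ hν
  -- the arc from point `0` to point `i + 1`, interpolated between `Q` (`s = 0`) and `P` (`s = 1`)
  set θ : ℝ → ℕ → ℝ := fun s i => Q (i + 1) - Q 0 + s * E (i + 1) with hθ
  have hθ_eq : ∀ s i, θ s i = (1 - s) * (Q (i + 1) - Q 0) + s * (P (i + 1) - P 0) := by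
    intro s i; simp only [hθ, hE, Pi.sub_apply]; ring
  have harc : ∀ {R : ℕ → ℝ}, StrictMono R → R (m + 1) = R 0 + 2 * π →
      ∀ i < m, R (i + 1) - R 0 ∈ Ioo 0 (2 * π) := by
    intro R hR hRm i hi
    constructor
    · linarith [hR (Nat.succ_pos i)]
    · linarith [hR (show i + 1 < m + 1 by omega)]
  have hθ_mem : ∀ s ∈ Icc (0 : ℝ) 1, ∀ i < m, θ s i ∈ Ioo 0 (2 * π) := by
    intro s hs i hi
    rw [hθ_eq]
    exact convex_Ioo 0 (2 * π) (harc hQ hQm i hi) (harc hP hPm i hi)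
      (by linarith [hs.2]) hs.1 (by ring)
  have hθ_mono : ∀ s ∈ Icc (0 : ℝ) 1, Monotone (θ s) := by
    intro s hs i j hij
    rw [hθ_eq, hθ_eq]
    have h1 : 0 ≤ 1 - s := by linarith [hs.2]
    have h2 := hs.1
    gcongr
    · exact hQ.monotone (by omega)
    · exact hP.monotone (by omega)
  set H : ℝ → ℝ := fun s => ∑ i ∈ Finset.range m, (σ (i + 1) - σ i) * Γ (θ s i) with hH
  have hH_deriv : ∀ s ∈ Icc (0 : ℝ) 1, HasDerivAt H
      (∑ i ∈ Finset.range m, deriv Γ (θ s i) * ((σ (i + 1) - σ i) * E (i + 1))) s := by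
    intro s hs
    refine HasDerivAt.fun_sum fun i hi => ?_
    have hlin : HasDerivAt (fun s => θ s i) (E (i + 1)) s := by
      have h := ((hasDerivAt_id s).mul_const (E (i + 1))).const_add (Q (i + 1) - Q 0)
      simp only [id, one_mul] at h
      exact h
    have hΓ' := hΓ.differentiableOn.differentiableAt
      (isOpen_Ioo.mem_nhds (hθ_mem s hs i (Finset.mem_range.1 hi)))
    exact ((hΓ'.hasDerivAt.comp s hlin).const_mul (σ (i + 1) - σ i)).congr_deriv (by ring)
  have hH_deriv_pos : ∀ s ∈ Icc (0 : ℝ) 1,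
      0 < ∑ i ∈ Finset.range m, deriv Γ (θ s i) * ((σ (i + 1) - σ i) * E (i + 1)) := by
    intro s hs
    refine sum_range_mul_pos_of_partialSums (fun i hi => hΓ.deriv_pos _ (hθ_mem s hs i hi)) ?_
      (fun k hk => signed_partialSum_mem_Icc hE0 hEm hσ1 hσ hk)
      (by rwa [signed_sum_eq_sum_abs hE0 hEm hσ])
    have hmaps : ∀ i ∈ Iio m, θ s i ∈ Ioo 0 (2 * π) := fun i hi => hθ_mem s hs i hi
    rcases hΓ.monotoneOn_deriv_or_antitoneOn_deriv with h | h
    · exact Or.inl fun i hi j hj hij => h (hmaps i hi) (hmaps j hj) (hθ_mono s hs hij)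
    · exact Or.inr fun i hi j hj hij => h (hmaps i hi) (hmaps j hj) (hθ_mono s hs hij)
  have hH_mono : StrictMonoOn H (Icc 0 1) := by
    refine strictMonoOn_of_deriv_pos (convex_Icc 0 1)
      (fun s hs => (hH_deriv s hs).continuousAt.continuousWithinAt) fun s hs => ?_
    rw [interior_Icc] at hs
    rw [(hH_deriv s (Ioo_subset_Icc_self hs)).deriv]
    exact hH_deriv_pos s (Ioo_subset_Icc_self hs)
  have hH01 := hH_mono (left_mem_Icc.2 zero_le_one) (right_mem_Icc.2 zero_le_one) zero_lt_one
  simp only [hH, hθ_eq, sub_zero, one_mul, zero_mul, add_zero, sub_self, zero_add] at hH01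
  simp only [mul_sub, Finset.sum_sub_distrib]
  linarith

theorem Fintype.sum_mul_sub_add_eq {G : Type*} [AddGroup G] [Fintype G] (σ W : G → ℝ) (c : G) :
    ∑ a, σ a * (W a - W (a + c)) = ∑ a, (σ a - σ (a - c)) * W a := by
  simp only [mul_sub, sub_mul, Finset.sum_sub_distrib]
  congr 1
  exact Fintype.sum_equiv (Equiv.addRight c) _ _ fun a => by simp

section CyclicLift

open Fin.NatCast

theorem Fin.sum_univ_eq_sum_range_add {M : Type*} [AddCommMonoid M] {n : ℕ} [NeZero n]
    (f : Fin n → M) (b : ℕ) : ∑ a, f a = ∑ r ∈ Finset.range n, f ((b + r : ℕ) : Fin n) := by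
  rw [← Fin.sum_univ_eq_sum_range (fun r => f ((b + r : ℕ) : Fin n)) n]
  simp only [Nat.cast_add, Fin.cast_val_eq_self]
  exact (Equiv.sum_comp (Equiv.addLeft (b : Fin n)) f).symm

def IsCyclicallyOrdered {m : ℕ} (x : Fin (m + 1) → ℝ) : Prop :=
  StrictMono x ∧ x (Fin.last m) < x 0 + 2 * π

-- `(k : Fin (m + 1))` is `k mod (m + 1)`; each wrap around the index circle adds a turn `2π`.
noncomputable def cyclicLift {m : ℕ} (x : Fin (m + 1) → ℝ) (k : ℕ) : ℝ :=
  x k + 2 * π * (k / (m + 1) : ℕ)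

variable {m : ℕ} {x : Fin (m + 1) → ℝ}

theorem cyclicLift_add_period (x : Fin (m + 1) → ℝ) (k : ℕ) :
    cyclicLift x (k + (m + 1)) = cyclicLift x k + 2 * π := by
  rw [cyclicLift, cyclicLift, Nat.add_div_right k m.succ_pos, Nat.cast_add k (m + 1),
    Fin.natCast_self, add_zero]
  push_cast
  ring

theorem IsCyclicallyOrdered.strictMono_cyclicLift (hx : IsCyclicallyOrdered x) :
    StrictMono (cyclicLift x) := by
  refine strictMono_nat_of_lt_succ fun k => ?_
  simp only [cyclicLift, Nat.succ_div, Nat.cast_add, Nat.cast_one]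
  by_cases hdvd : m + 1 ∣ k + 1
  · have hk : (k : Fin (m + 1)) = Fin.last m := by
      rw [← add_left_inj 1, Fin.last_add_one, ← Nat.cast_succ, Fin.natCast_eq_zero.2 hdvd]
    rw [if_pos hdvd, ← Nat.cast_succ, Fin.natCast_eq_zero.2 hdvd, hk]
    push_cast
    linarith [hx.2]
  · have hk : (k : Fin (m + 1)) < k + 1 := by
      rw [Fin.lt_add_one_iff, Fin.lt_last_iff_ne_last]
      intro hk
      apply hdvd
      rw [← Fin.natCast_eq_zero, Nat.cast_succ, hk, Fin.last_add_one]
    simp only [if_neg hdvd, Nat.cast_zero, add_zero]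
    linarith [hx.1 hk]

theorem cyclicLift_sub_cyclicLift (x y : Fin (m + 1) → ℝ) (k : ℕ) :
    cyclicLift x k - cyclicLift y k = (x - y) k := by
  simp only [cyclicLift, Pi.sub_apply]; ring

theorem Function.Periodic.comp_cyclicLift_sub {Γ : ℝ → ℝ} (hper : Function.Periodic Γ (2 * π))
    (x : Fin (m + 1) → ℝ) (k l : ℕ) :
    Γ (cyclicLift x k - cyclicLift x l) = Γ (x k - x l) := by
  have h : cyclicLift x k - cyclicLift x l
      = x k - x l + ((k / (m + 1) : ℕ) - (l / (m + 1) : ℕ) : ℤ) * (2 * π) := by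
    simp only [cyclicLift, Int.cast_sub, Int.cast_natCast]; ring
  rw [h, hper.int_mul]

theorem IsMonotoneCoupling.sum_sign_diff_mul_sub_pos {Γ : ℝ → ℝ} (hΓ : IsMonotoneCoupling Γ)
    (hper : Function.Periodic Γ (2 * π)) {x y σ : Fin (m + 1) → ℝ}
    (hx : IsCyclicallyOrdered x) (hy : IsCyclicallyOrdered y) (hσ1 : ∀ a, |σ a| ≤ 1)
    (hσ : ∀ a, σ a * ((x - y) a - (x - y) (a + 1)) = |(x - y) a - (x - y) (a + 1)|)
    (hν : 0 < ∑ a, |(x - y) a - (x - y) (a + 1)|) (b : Fin (m + 1)) :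
    0 < ∑ a, (σ a - σ (a - 1)) * (Γ (x a - x b) - Γ (y a - y b)) := by
  have hshift : ∀ r : ℕ,
      ((b + (r + 1) : ℕ) : Fin (m + 1)) = ((b + r : ℕ) : Fin (m + 1)) + 1 := by
    intro r; rw [← add_assoc, Nat.cast_succ]
  have hbase : (((b : ℕ) + 0 : ℕ) : Fin (m + 1)) = b := by rw [add_zero, Fin.cast_val_eq_self]
  have hcore := hΓ.sum_range_sign_diff_mul_sub_pos (m := m)
    (P := fun r => cyclicLift x (b + r)) (Q := fun r => cyclicLift y (b + r))
    (σ := fun r => σ ((b + r : ℕ) : Fin (m + 1)))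
    (fun r s h => hx.strictMono_cyclicLift (by omega))
    (fun r s h => hy.strictMono_cyclicLift (by omega))
    (cyclicLift_add_period x b) (cyclicLift_add_period y b) (fun r => hσ1 _)
    (fun r => by simpa only [Pi.sub_apply, cyclicLift_sub_cyclicLift, hshift] using hσ _)
    (by
      rw [Fin.sum_univ_eq_sum_range_add _ b] at hν
      simpa only [Pi.sub_apply, cyclicLift_sub_cyclicLift, hshift] using hν)
  simp only [hper.comp_cyclicLift_sub, hbase, hshift] at hcore
  rw [Fin.sum_univ_eq_sum_range_add _ b, Finset.sum_range_succ', hbase]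
  simpa [hshift] using hcore

end CyclicLift

-- Includes the self-interaction `Γ 0`, which cancels from every difference of two such sums.
noncomputable def couplingSum (Γ : ℝ → ℝ) {n : ℕ} (x : Fin n → ℝ) (a : Fin n) : ℝ :=
  ∑ b, Γ (x a - x b)

theorem IsMonotoneCoupling.sum_sign_diff_mul_couplingSum_sub_pos {Γ : ℝ → ℝ}
    (hΓ : IsMonotoneCoupling Γ) (hper : Function.Periodic Γ (2 * π)) {m : ℕ}
    {x y σ : Fin (m + 1) → ℝ} (hx : IsCyclicallyOrdered x) (hy : IsCyclicallyOrdered y)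
    (hσ1 : ∀ a, |σ a| ≤ 1)
    (hσ : ∀ a, σ a * ((x - y) a - (x - y) (a + 1)) = |(x - y) a - (x - y) (a + 1)|)
    (hν : 0 < ∑ a, |(x - y) a - (x - y) (a + 1)|) :
    0 < ∑ a, (σ a - σ (a - 1)) * (couplingSum Γ x a - couplingSum Γ y a) := by
  simp only [couplingSum, ← Finset.sum_sub_distrib, Finset.mul_sum]
  rw [Finset.sum_comm]
  exact Finset.sum_pos (fun b _ => hΓ.sum_sign_diff_mul_sub_pos hper hx hy hσ1 hσ hν b)
    Finset.univ_nonempty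

-- Index `0` is the reference oscillator `θ₁`, at relative phase `0`; index `i + 1` carries `φᵢ`.
def consZero {m : ℕ} (v : Fin m → ℝ) : Fin (m + 1) → ℝ :=
  Fin.cons 0 v

@[simp] theorem consZero_zero {m : ℕ} (v : Fin m → ℝ) : consZero v 0 = 0 := rfl

@[simp] theorem consZero_succ {m : ℕ} (v : Fin m → ℝ) (i : Fin m) :
    consZero v i.succ = v i := rfl

theorem consZero_sub {m : ℕ} (v w : Fin m → ℝ) :
    consZero (v - w) = consZero v - consZero w := by
  funext a; induction a using Fin.cases <;> simp

theorem relVF_eq_couplingSum_sub (Γ : ℝ → ℝ) {m : ℕ} (v : Fin m → ℝ) (i : Fin m) :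
    relVF Γ v i = couplingSum Γ (consZero v) i.succ - couplingSum Γ (consZero v) 0 := by
  simp [relVF, couplingSum, Fin.sum_univ_succ, Finset.sum_erase_eq_sub]
  ring

theorem norm1_eq_sum_consZero {m : ℕ} (v : Fin m → ℝ) :
    norm1 v = ∑ a : Fin (m + 1), |consZero v a - consZero v (a + 1)| := by
  cases m with
  | zero => simp [norm1]
  | succ m =>
    rw [Fin.sum_univ_castSucc, Fin.last_add_one, Fin.sum_univ_succ]
    simp only [Fin.coeSucc_eq_succ, Fin.castSucc_zero, ← Fin.succ_last,
      consZero_zero, consZero_succ, zero_sub, abs_neg, sub_zero]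
    rw [norm1, dif_pos m.succ_pos]
    simp only [add_tsub_cancel_right]
    rw [add_right_comm]
    rfl

theorem continuous_norm1 {m : ℕ} : Continuous (norm1 : (Fin m → ℝ) → ℝ) := by
  unfold norm1
  split_ifs <;> fun_prop

theorem norm1_pos {m : ℕ} {v : Fin m → ℝ} (hv : v ≠ 0) : 0 < norm1 v := by
  rw [norm1_eq_sum_consZero]
  refine lt_of_le_of_ne (Finset.sum_nonneg fun a _ => abs_nonneg _) fun h => hv ?_
  have hstep := (Finset.sum_eq_zero_iff_of_nonneg fun a _ => abs_nonneg _).1 h.symm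
  have hzero : ∀ a : Fin (m + 1), consZero v a = 0 := by
    refine Fin.induction rfl fun i hi => ?_
    have := hstep i.castSucc (Finset.mem_univ _)
    rw [Fin.coeSucc_eq_succ, abs_eq_zero, sub_eq_zero, hi] at this
    exact this.symm
  funext i
  simpa using hzero i.succ

theorem isCyclicallyOrdered_consZero {m : ℕ} {v : Fin m → ℝ} (hv : v ∈ phaseCone) :
    IsCyclicallyOrdered (consZero v) := by
  refine ⟨Fin.strictMono_cons.2 ⟨hv.1, hv.2.1⟩, ?_⟩
  have hlt : ∀ a : Fin (m + 1), consZero v a < 2 * π := Fin.cases two_pi_pos hv.2.2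
  simpa using hlt (Fin.last m)

theorem hasDerivAt_consZero_of_relVF {Γ : ℝ → ℝ} {m : ℕ} {φ : ℝ → Fin m → ℝ} {t : ℝ}
    (hφ : ∀ i, HasDerivAt (fun s => φ s i) (relVF Γ (φ t) i) t) (a : Fin (m + 1)) :
    HasDerivAt (fun s => consZero (φ s) a)
      (couplingSum Γ (consZero (φ t)) a - couplingSum Γ (consZero (φ t)) 0) t := by
  induction a using Fin.cases with
  | zero => simpa using hasDerivAt_const t (0 : ℝ)
  | succ i => simpa [relVF_eq_couplingSum_sub] using hφ i

theorem eventually_lt_of_le_of_hasDerivAt {f g : ℝ → ℝ} {t D : ℝ} (hle : ∀ u, g u ≤ f u)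
    (heq : g t = f t) (hg : HasDerivAt g D t) (hD : 0 < D) : ∀ᶠ u in 𝓝[>] t, f t < f u := by
  have hslope := (hasDerivAt_iff_tendsto_slope.1 hg).mono_left (nhdsGT_le_nhdsNE t)
  filter_upwards [hslope.eventually (eventually_gt_nhds hD), self_mem_nhdsWithin] with u hu htu
  rw [slope_def_field, div_pos_iff_of_pos_right (sub_pos.2 htu)] at hu
  linarith [hle u]

theorem strictMonoOn_Icc_of_eventually_lt {f : ℝ → ℝ} {a b : ℝ} (hf : ContinuousOn f (Icc a b))
    (h : ∀ t ∈ Ico a b, ∀ᶠ u in 𝓝[>] t, f t < f u) : StrictMonoOn f (Icc a b) := by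
  have hmono : ∀ u ∈ Icc a b, ∀ v ∈ Icc u b, f u ≤ f v := by
    intro u hu
    refine IsClosed.Icc_subset_of_forall_mem_nhdsWithin (s := {v | f u ≤ f v}) ?_
      (le_refl (f u)) ?_
    · rw [inter_comm]
      exact (hf.mono (Icc_subset_Icc_left hu.1)).preimage_isClosed_of_isClosed isClosed_Icc
        isClosed_Ici
    · intro v hv
      filter_upwards [h v ⟨hu.1.trans hv.2.1, hv.2.2⟩] with w hw using hv.1.trans hw.le
  intro u hu v hv huv
  obtain ⟨w, hw, huw, hwv⟩ := ((h u ⟨hu.1, huv.trans_le hv.2⟩).and (Ioc_mem_nhdsGT huv)).exists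
  exact hw.trans_le (hmono w ⟨hu.1.trans huw.le, hwv.trans hv.2⟩ v ⟨hwv, hv.2⟩)

theorem IsMonotoneCoupling.eventually_norm1_sub_lt {Γ : ℝ → ℝ} (hΓ : IsMonotoneCoupling Γ)
    (hper : Function.Periodic Γ (2 * π)) {m : ℕ} {φ ψ : ℝ → Fin m → ℝ} {t : ℝ}
    (hφ : φ t ∈ phaseCone) (hψ : ψ t ∈ phaseCone)
    (hφsol : ∀ i, HasDerivAt (fun s => φ s i) (relVF Γ (φ t) i) t)
    (hψsol : ∀ i, HasDerivAt (fun s => ψ s i) (relVF Γ (ψ t) i) t) (hne : φ t ≠ ψ t) :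
    ∀ᶠ u in 𝓝[>] t, norm1 (φ t - ψ t) < norm1 (φ u - ψ u) := by
  set e := fun u => consZero (φ u) - consZero (ψ u)
  set σ : Fin (m + 1) → ℝ := fun a => SignType.sign (e t a - e t (a + 1))
  have hσ1 : ∀ a, |σ a| ≤ 1 := fun a => by
    simp only [σ]
    generalize SignType.sign (e t a - e t (a + 1)) = s
    cases s <;> simp
  have hσ : ∀ a, σ a * (e t a - e t (a + 1)) = |e t a - e t (a + 1)| := fun a => sign_mul_self _
  have hnorm : ∀ u, norm1 (φ u - ψ u) = ∑ a, |e u a - e u (a + 1)| := fun u => by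
    rw [norm1_eq_sum_consZero, consZero_sub]
  set g := fun u => ∑ a, σ a * (e u a - e u (a + 1))
  have hle : ∀ u, g u ≤ norm1 (φ u - ψ u) := fun u => by
    rw [hnorm]
    refine Finset.sum_le_sum fun a _ => (le_abs_self _).trans ?_
    rw [abs_mul]
    exact mul_le_of_le_one_left (abs_nonneg _) (hσ1 a)
  have heq : g t = norm1 (φ t - ψ t) := by
    rw [hnorm]
    exact Finset.sum_congr rfl fun a _ => hσ a
  set W := fun a => couplingSum Γ (consZero (φ t)) a - couplingSum Γ (consZero (ψ t)) a
  have he : ∀ a, HasDerivAt (fun u => e u a) (W a - W 0) t := fun a =>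
    ((hasDerivAt_consZero_of_relVF hφsol a).sub (hasDerivAt_consZero_of_relVF hψsol a)).congr_deriv
      (by simp only [W]; ring)
  have hderiv : HasDerivAt g (∑ a, σ a * (W a - W (a + 1))) t :=
    HasDerivAt.fun_sum fun a _ =>
      (((he a).sub (he (a + 1))).const_mul (σ a)).congr_deriv (by ring)
  have hD : 0 < ∑ a, σ a * (W a - W (a + 1)) := by
    rw [Fintype.sum_mul_sub_add_eq]
    refine hΓ.sum_sign_diff_mul_couplingSum_sub_pos hper (isCyclicallyOrdered_consZero hφ)
      (isCyclicallyOrdered_consZero hψ) hσ1 hσ ?_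
    rw [← hnorm]
    exact norm1_pos (sub_ne_zero.2 hne)
  exact eventually_lt_of_le_of_hasDerivAt hle heq hderiv hD

theorem Ioo_zero_two_pi_subset : Ioo 0 (2 * π) ⊆ {θ : ℝ | ∀ k : ℤ, θ ≠ 2 * π * k} := by
  rintro θ ⟨h0, h2π⟩ k rfl
  have hk0 : (0 : ℤ) < k := by exact_mod_cast pos_of_mul_pos_right h0 two_pi_pos.le
  have hk1 : k < 1 := by exact_mod_cast (mul_lt_iff_lt_one_right two_pi_pos).1 h2π
  omega

theorem monotoneOn_deriv_or_antitoneOn_deriv {f : ℝ → ℝ} {a b : ℝ}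
    (hf : ContDiffOn ℝ 2 f (Ioo a b))
    (h : (∀ x ∈ Ioo a b, 0 < deriv (deriv f) x) ∨ (∀ x ∈ Ioo a b, deriv (deriv f) x < 0)) :
    MonotoneOn (deriv f) (Ioo a b) ∨ AntitoneOn (deriv f) (Ioo a b) := by
  have hcont : ContinuousOn (deriv f) (Ioo a b) :=
    hf.continuousOn_deriv_of_isOpen isOpen_Ioo (by norm_num)
  rcases h with h | h
  · exact Or.inl
      (strictMonoOn_of_deriv_pos (convex_Ioo a b) hcont (by rwa [interior_Ioo])).monotoneOn
  · exact Or.inr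
      (strictAntiOn_of_deriv_neg (convex_Ioo a b) hcont (by rwa [interior_Ioo])).antitoneOn

theorem monotone_coupling_expanding_general
    (N : ℕ) (Γ : ℝ → ℝ)
    (hper : Function.Periodic Γ (2 * π))
    (hC2 : ContDiffOn ℝ 2 Γ {θ : ℝ | ∀ k : ℤ, θ ≠ 2 * π * k})
    (hmono : ∀ θ ∈ Ioo (0 : ℝ) (2 * π), 0 < deriv Γ θ)
    (hconv : (∀ θ ∈ Ioo (0 : ℝ) (2 * π), 0 < deriv (deriv Γ) θ) ∨
             (∀ θ ∈ Ioo (0 : ℝ) (2 * π), deriv (deriv Γ) θ < 0))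
    (T : ℝ) (φ ψ : ℝ → Fin (N - 1) → ℝ)
    (hφcone : ∀ t ∈ Icc (0 : ℝ) T, φ t ∈ phaseCone)
    (hψcone : ∀ t ∈ Icc (0 : ℝ) T, ψ t ∈ phaseCone)
    (hφsol : ∀ t ∈ Icc (0 : ℝ) T, ∀ i, HasDerivAt (fun s => φ s i) (relVF Γ (φ t) i) t)
    (hψsol : ∀ t ∈ Icc (0 : ℝ) T, ∀ i, HasDerivAt (fun s => ψ s i) (relVF Γ (ψ t) i) t)
    (hne : ∀ t ∈ Icc (0 : ℝ) T, φ t ≠ ψ t) :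
    StrictMonoOn (fun t => norm1 (φ t - ψ t)) (Icc (0 : ℝ) T) := by
  have hC2' : ContDiffOn ℝ 2 Γ (Ioo 0 (2 * π)) := hC2.mono Ioo_zero_two_pi_subset
  have hΓ : IsMonotoneCoupling Γ :=
    ⟨hC2'.differentiableOn (by norm_num), hmono, monotoneOn_deriv_or_antitoneOn_deriv hC2' hconv⟩
  refine strictMonoOn_Icc_of_eventually_lt (fun t ht => ?_) fun t ht => ?_
  · have hsub : ContinuousAt (fun u => φ u - ψ u) t :=
      continuousAt_pi.2 fun i => ((hφsol t ht i).sub (hψsol t ht i)).continuousAt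
    exact (continuous_norm1.continuousAt.comp hsub).continuousWithinAt
  · have ht' := Ico_subset_Icc_self ht
    exact hΓ.eventually_norm1_sub_lt hper (hφcone t ht') (hψcone t ht') (hφsol t ht')
      (hψsol t ht') (hne t ht')

/-- Theorem (expansion for monotone increasing coupling functions):
if the 2π-periodic coupling function `Γ` is C² away from `2πℤ`, monotone
increasing and of constant convexity on `(0,2π)`, then the relative phase
dynamics are expanding in the cone with respect to the 1-norm: along any two
C¹ solutions staying in the cone and never coinciding, the 1-norm of their
difference strictly increases. -/
theorem monotone_coupling_expanding
    (N : ℕ) (hN : 2 ≤ N) (Γ : ℝ → ℝ)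
    (hper : Function.Periodic Γ (2 * π))
    (hC2 : ContDiffOn ℝ 2 Γ {θ : ℝ | ∀ k : ℤ, θ ≠ 2 * π * k})
    (hmono : ∀ θ ∈ Ioo (0 : ℝ) (2 * π), 0 < deriv Γ θ)
    (hconv : (∀ θ ∈ Ioo (0 : ℝ) (2 * π), 0 < deriv (deriv Γ) θ) ∨
             (∀ θ ∈ Ioo (0 : ℝ) (2 * π), deriv (deriv Γ) θ < 0))
    (T : ℝ) (φ ψ : ℝ → Fin (N - 1) → ℝ)
    (hφC1 : ∀ i, ContDiffOn ℝ 1 (fun t => φ t i) (Icc 0 T))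
    (hψC1 : ∀ i, ContDiffOn ℝ 1 (fun t => ψ t i) (Icc 0 T))
    (hφcone : ∀ t ∈ Icc (0 : ℝ) T, φ t ∈ phaseCone)
    (hψcone : ∀ t ∈ Icc (0 : ℝ) T, ψ t ∈ phaseCone)
    (hφsol : ∀ t ∈ Icc (0 : ℝ) T, ∀ i, HasDerivAt (fun s => φ s i) (relVF Γ (φ t) i) t)
    (hψsol : ∀ t ∈ Icc (0 : ℝ) T, ∀ i, HasDerivAt (fun s => ψ s i) (relVF Γ (ψ t) i) t)
    (hne : ∀ t ∈ Icc (0 : ℝ) T, φ t ≠ ψ t) :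
    StrictMonoOn (fun t => norm1 (φ t - ψ t)) (Icc (0 : ℝ) T) :=
  monotone_coupling_expanding_general N Γ hper hC2 hmono hconv T φ ψ hφcone hψcone hφsol hψsol hne
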